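/- arXiv:1810.13200 — 3 statements merged into one kernel-verified Lean document; each statement's English description precedes it below -/
import Mathlib

section
/- Let H_{2^r} denote the 2^r × 2^r Hadamard basis in Paley order and W_{2^r} the 1D discrete Haar wavelet basis, both defined recursively. Then H_{2^r}^* W_{2^r} is block diagonal: its restriction to rows indexed by the dyadic level 𝒯_t and columns indexed by 𝒯_ℓ equals H_{2^{t−1}}^* if t = ℓ, and is the zero matrix otherwise. -/
/-- Paley-ordered Hadamard basis `H_{2^r}`, given entrywise:
`Had r i j` is the `(i,j)` entry (0-based) of the `2^r × 2^r` matrix defined by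
`H_1 = [1]`, `H_{2N} = (1/√2)[H_N ⊗ (1,1)ᵀ, H_N ⊗ (1,-1)ᵀ]`. -/
noncomputable def Had : ℕ → ℕ → ℕ → ℝ
  | 0, _, _ => 1
  | r + 1, i, j =>
    if j < 2 ^ r then (Real.sqrt 2)⁻¹ * Had r (i / 2) j
    else (if i % 2 = 0 then (1 : ℝ) else -1) * ((Real.sqrt 2)⁻¹ * Had r (i / 2) (j - 2 ^ r))

/-- 1D discrete Haar wavelet basis `W_{2^r}`, entrywise:
`W_1 = [1]`, `W_{2N} = (1/√2)[W_N ⊗ (1,1)ᵀ, I_N ⊗ (1,-1)ᵀ]`. -/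
noncomputable def HaarW : ℕ → ℕ → ℕ → ℝ
  | 0, _, _ => 1
  | r + 1, i, j =>
    if j < 2 ^ r then (Real.sqrt 2)⁻¹ * HaarW r (i / 2) j
    else (Real.sqrt 2)⁻¹ * (if i / 2 = j - 2 ^ r then (if i % 2 = 0 then (1 : ℝ) else -1) else 0)

/-- Haar scaling matrix `W⁰_{2^r}`, entrywise:
`W⁰_1 = [1]`, `W⁰_{2N} = (1/√2)[W⁰_N ⊗ (1,1)ᵀ, I_N ⊗ (1,1)ᵀ]`. -/
noncomputable def HaarW0 : ℕ → ℕ → ℕ → ℝ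
  | 0, _, _ => 1
  | r + 1, i, j =>
    if j < 2 ^ r then (Real.sqrt 2)⁻¹ * HaarW0 r (i / 2) j
    else (Real.sqrt 2)⁻¹ * (if i / 2 = j - 2 ^ r then (1 : ℝ) else 0)

lemma sum_double (n : ℕ) (f : ℕ → ℝ) :
    ∑ k ∈ Finset.range (2 * n), f k = ∑ q ∈ Finset.range n, (f (2 * q) + f (2 * q + 1)) := by
  induction n with
  | zero => simp
  | succ n ih =>
      rw [show 2 * (n + 1) = (2 * n + 1) + 1 by ring, Finset.sum_range_succ,
        Finset.sum_range_succ, ih, Finset.sum_range_succ, add_assoc]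

lemma two_inv : (Real.sqrt 2)⁻¹ * (Real.sqrt 2)⁻¹ = (2 : ℝ)⁻¹ := by
  rw [← mul_inv, Real.mul_self_sqrt (by norm_num)]

/-- `H_{2^r}^* W_{2^r}` is block diagonal over dyadic levels:
the `(𝒯_t, 𝒯_ℓ)` block equals `H_{2^{t-1}}^*` if `t = ℓ` and vanishes otherwise.
(0-based: the row `2^{t-1}+a` and column `2^{ℓ-1}+b` correspond to the `a`-th
element of `𝒯_t` and `b`-th element of `𝒯_ℓ`.) -/
theorem stmt_1 (r t ℓ a b : ℕ) (ht1 : 1 ≤ t) (htr : t ≤ r) (hl1 : 1 ≤ ℓ) (hlr : ℓ ≤ r)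
    (ha : a < 2 ^ (t - 1)) (hb : b < 2 ^ (ℓ - 1)) :
    (∑ k ∈ Finset.range (2 ^ r), Had r k (2 ^ (t - 1) + a) * HaarW r k (2 ^ (ℓ - 1) + b)) =
    if t = ℓ then Had (t - 1) b a else 0 := by
  induction r generalizing t ℓ a b with
  | zero => omega
  | succ r ih =>
    rw [show (2 : ℕ) ^ (r + 1) = 2 * 2 ^ r by ring, sum_double]
    have hdiv0 : ∀ q : ℕ, 2 * q / 2 = q := fun q => by omega
    have hdiv1 : ∀ q : ℕ, (2 * q + 1) / 2 = q := fun q => by omega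
    have hmod0 : ∀ q : ℕ, 2 * q % 2 = 0 := fun q => by omega
    have hmod1 : ∀ q : ℕ, (2 * q + 1) % 2 = 1 := fun q => by omega
    by_cases hT : t ≤ r
    · have hcl : 2 ^ (t - 1) + a < 2 ^ r := by
        have h1 : 2 ^ (t - 1) + a < 2 ^ t := by
          have : (2 : ℕ) ^ t = 2 ^ (t - 1) * 2 := by
            rw [← pow_succ]; congr 1; omega
          omega
        exact lt_of_lt_of_le h1 (Nat.pow_le_pow_right (by norm_num) hT)
      by_cases hL : ℓ ≤ r
      · -- both in lower block
        have hdl : 2 ^ (ℓ - 1) + b < 2 ^ r := by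
          have h1 : 2 ^ (ℓ - 1) + b < 2 ^ ℓ := by
            have : (2 : ℕ) ^ ℓ = 2 ^ (ℓ - 1) * 2 := by
              rw [← pow_succ]; congr 1; omega
            omega
          exact lt_of_lt_of_le h1 (Nat.pow_le_pow_right (by norm_num) hL)
        rw [← ih t ℓ a b ht1 hT hl1 hL ha hb]
        apply Finset.sum_congr rfl
        intro q _
        simp only [Had, HaarW, if_pos hcl, if_pos hdl, hdiv0, hdiv1]
        linear_combination (2 * Had r q (2 ^ (t - 1) + a) * HaarW r q (2 ^ (ℓ - 1) + b)) * two_inv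
      · -- ℓ = r + 1, t ≤ r : zero block
        have hle : ℓ = r + 1 := by omega
        subst hle
        have hne : ¬ t = r + 1 := by omega
        rw [if_neg hne]
        have hdl : ¬ (2 ^ (r + 1 - 1) + b < 2 ^ r) := by simp
        apply Finset.sum_eq_zero
        intro q _
        simp only [Had, HaarW, if_pos hcl, if_neg hdl, hdiv0, hdiv1, hmod0, hmod1]
        rcases eq_or_ne q b with hq | hq <;> simp [hq]
    · -- t = r + 1
      have hte : t = r + 1 := by omega
      subst hte
      have hcl : ¬ (2 ^ (r + 1 - 1) + a < 2 ^ r) := by simp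
      by_cases hL : ℓ ≤ r
      · have hne : ¬ r + 1 = ℓ := by omega
        rw [if_neg hne]
        have hdl : 2 ^ (ℓ - 1) + b < 2 ^ r := by
          have h1 : 2 ^ (ℓ - 1) + b < 2 ^ ℓ := by
            have : (2 : ℕ) ^ ℓ = 2 ^ (ℓ - 1) * 2 := by
              rw [← pow_succ]; congr 1; omega
            omega
          exact lt_of_lt_of_le h1 (Nat.pow_le_pow_right (by norm_num) hL)
        apply Finset.sum_eq_zero
        intro q _
        simp only [Had, HaarW, if_neg hcl, if_pos hdl, hdiv0, hdiv1, hmod0, hmod1]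
        norm_num
      · -- t = ℓ = r + 1 : diagonal block
        have hle : ℓ = r + 1 := by omega
        subst hle
        rw [if_pos rfl]
        have hsub : 2 ^ (r + 1 - 1) + a - 2 ^ r = a := by simp
        have hsubb : 2 ^ (r + 1 - 1) + b - 2 ^ r = b := by simp
        have hdl : ¬ (2 ^ (r + 1 - 1) + b < 2 ^ r) := by simp
        have key : ∀ q ∈ Finset.range (2 ^ r),
            (Had (r+1) (2*q) (2 ^ (r + 1 - 1) + a) * HaarW (r+1) (2*q) (2 ^ (r + 1 - 1) + b) +
             Had (r+1) (2*q+1) (2 ^ (r + 1 - 1) + a) * HaarW (r+1) (2*q+1) (2 ^ (r + 1 - 1) + b)) =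
            if q = b then Had r b a else 0 := by
          intro q _
          simp only [Had, HaarW, if_neg hcl, if_neg hdl, hdiv0, hdiv1, hmod0, hmod1,
            hsub, hsubb]
          by_cases hq : q = b
          · subst hq
            simp only [if_pos rfl, if_true]
            norm_num
            linear_combination (2 * Had r q a) * two_inv
          · simp [hq]
        rw [Finset.sum_congr rfl key, Finset.sum_ite_eq' (Finset.range (2 ^ r)) b]
        simp only [Finset.mem_range]
        rw [if_pos (by simpa using hb)]
        simp
end

section
/- For the recursion H_{2N}^* W_{2N}, one has the block identity: H_{2N}^* W_{2N} is the block diagonal matrix with blocks H_N^* W_N (upper-left) and H_N^* (lower-right), where H is the Paley Hadamard basis and W the 1D Haar wavelet basis. -/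
lemma sum_range_two_mul (n : ℕ) (f : ℕ → ℝ) :
    ∑ k ∈ Finset.range (2*n), f k = ∑ q ∈ Finset.range n, (f (2*q) + f (2*q+1)) := by
  induction n with
  | zero => simp
  | succ n ih =>
    rw [Nat.mul_succ, Finset.sum_range_succ, Finset.sum_range_succ, Finset.sum_range_succ, ← ih]
    ring_nf

/-- Block recursion: `H_{2N}^* W_{2N} = diag(H_N^* W_N, H_N^*)` (with `N = 2^r`). -/
theorem stmt_3 (r i j : ℕ) (hi : i < 2 ^ (r + 1)) (hj : j < 2 ^ (r + 1)) :
    (∑ k ∈ Finset.range (2 ^ (r + 1)), Had (r + 1) k i * HaarW (r + 1) k j) =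
    if i < 2 ^ r then
      (if j < 2 ^ r then ∑ k ∈ Finset.range (2 ^ r), Had r k i * HaarW r k j else 0)
    else
      (if j < 2 ^ r then 0 else Had r (j - 2 ^ r) (i - 2 ^ r)) := by
  have hs : Real.sqrt 2 * Real.sqrt 2 = 2 := Real.mul_self_sqrt (by norm_num)
  have hc : ((Real.sqrt 2)⁻¹)^2 = (2:ℝ)⁻¹ := by rw [sq, ← mul_inv, hs]
  rw [show (2:ℕ)^(r+1) = 2 * 2^r from pow_succ' 2 r, sum_range_two_mul]
  have hdiv : ∀ q : ℕ, (2*q)/2 = q := fun q => by omega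
  have hdiv1 : ∀ q : ℕ, (2*q+1)/2 = q := fun q => by omega
  have hmod : ∀ q : ℕ, (2*q) % 2 = 0 := fun q => by omega
  have hmod1 : ∀ q : ℕ, (2*q+1) % 2 = 1 := fun q => by omega
  by_cases hi' : i < 2^r <;> by_cases hj' : j < 2^r <;>
    simp only [hi', hj', if_true, if_false, Had, HaarW, hdiv, hdiv1, hmod, hmod1,
      Nat.one_ne_zero, reduceIte]
  · apply Finset.sum_congr rfl
    intro q _
    have h1 : ((Real.sqrt 2)⁻¹ * Had r q i * ((Real.sqrt 2)⁻¹ * HaarW r q j)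
        + (Real.sqrt 2)⁻¹ * Had r q i * ((Real.sqrt 2)⁻¹ * HaarW r q j))
      = (((Real.sqrt 2)⁻¹)^2 * 2) * (Had r q i * HaarW r q j) := by ring
    rw [h1, hc]; ring
  · apply Finset.sum_eq_zero
    intro q _
    by_cases h : q = j - 2^r <;> simp [h] <;> ring
  · apply Finset.sum_eq_zero
    intro q _
    ring
  · have key : ∀ q ∈ Finset.range (2^r),
        (1 * ((Real.sqrt 2)⁻¹ * Had r q (i - 2^r)) * ((Real.sqrt 2)⁻¹ * (if q = j - 2^r then (1:ℝ) else 0))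
         + -1 * ((Real.sqrt 2)⁻¹ * Had r q (i - 2^r)) * ((Real.sqrt 2)⁻¹ * (if q = j - 2^r then (-1:ℝ) else 0)))
        = (if q = j - 2^r then Had r q (i - 2^r) else 0) := by
      intro q _
      by_cases h : q = j - 2^r
      · simp only [h, if_true, reduceIte]
        have h1 : (1 * ((Real.sqrt 2)⁻¹ * Had r (j-2^r) (i - 2^r)) * ((Real.sqrt 2)⁻¹ * 1)
           + -1 * ((Real.sqrt 2)⁻¹ * Had r (j-2^r) (i - 2^r)) * ((Real.sqrt 2)⁻¹ * (-1)))
          = (((Real.sqrt 2)⁻¹)^2 * 2) * Had r (j-2^r) (i - 2^r) := by ring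
        rw [h1, hc]; ring
      · simp [h]
    rw [Finset.sum_congr rfl key, Finset.sum_ite_eq' (Finset.range (2^r)) (j - 2^r)
      (fun q => Had r q (i - 2^r))]
    have hmem : j - 2^r ∈ Finset.range (2^r) := by
      simp only [Finset.mem_range]
      omega
    simp [hmem]
end

section
/- For the Paley Hadamard basis H_{2^r} and Haar wavelet basis W_{2^r}, and for j ≥ 2, the local coherence of row j of H_{2^r}^* W_{2^r} restricted to wavelet level ℓ columns satisfies: μ_j(H^* W P_{𝒯_ℓ}^T) = min{1, 2^{−⌊log₂(j−1)⌋/2}} if ⌊log₂(j−1)⌋ = ℓ−1, and μ_j(H^* W P_{𝒯_ℓ}^T) = 0 otherwise. -/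

noncomputable def Gmat (r j k : ℕ) : ℝ :=
  ∑ m ∈ Finset.range (2 ^ r), Had r m j * HaarW r m k

lemma Gmat_def (r j k : ℕ) :
    Gmat r j k = ∑ m ∈ Finset.range (2 ^ r), Had r m j * HaarW r m k := rfl

lemma had_abs (r : ℕ) : ∀ i j, |Had r i j| = (Real.sqrt 2)⁻¹ ^ r := by
  induction r with
  | zero => intro i j; simp [Had]
  | succ r ih =>
    intro i j
    have h2 : (0:ℝ) ≤ (Real.sqrt 2)⁻¹ := by positivity
    simp only [Had]
    split_ifs with h1 hp
    · rw [abs_mul, abs_of_nonneg h2, ih, pow_succ]; ring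
    · rw [abs_mul, abs_mul, abs_of_nonneg h2, abs_one, ih, pow_succ]; ring
    · rw [abs_mul, abs_mul, abs_of_nonneg h2, abs_neg, abs_one, ih, pow_succ]; ring

lemma sum_pair (n : ℕ) (f : ℕ → ℝ) :
    ∑ m ∈ Finset.range (2 * n), f m = ∑ q ∈ Finset.range n, (f (2 * q) + f (2 * q + 1)) := by
  induction n with
  | zero => simp
  | succ n ih =>
    have h : 2 * (n + 1) = (2 * n + 1) + 1 := by ring
    rw [h, Finset.sum_range_succ, Finset.sum_range_succ, ih, Finset.sum_range_succ]
    ring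

lemma Gmat_succ (r j k : ℕ) (hk : k < 2 ^ (r + 1)) :
    Gmat (r + 1) j k =
      if j < 2 ^ r then (if k < 2 ^ r then Gmat r j k else 0)
      else if k < 2 ^ r then 0 else Had r (k - 2 ^ r) (j - 2 ^ r) := by
  have hs : (Real.sqrt 2)⁻¹ * (Real.sqrt 2)⁻¹ = 2⁻¹ := by
    rw [← mul_inv]; norm_num [Real.mul_self_sqrt]
  unfold Gmat
  rw [pow_succ, mul_comm ((2:ℕ) ^ r) 2, sum_pair]
  have key : ∀ q : ℕ,
      Had (r+1) (2*q) j * HaarW (r+1) (2*q) k + Had (r+1) (2*q+1) j * HaarW (r+1) (2*q+1) k =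
      if j < 2 ^ r then (if k < 2 ^ r then Had r q j * HaarW r q k else 0)
      else if k < 2 ^ r then 0
      else (if q = k - 2 ^ r then Had r q (j - 2 ^ r) else 0) := by
    intro q
    have e1 : 2 * q / 2 = q := by omega
    have e2 : 2 * q % 2 = 0 := by omega
    have e3 : (2 * q + 1) / 2 = q := by omega
    have e4 : (2 * q + 1) % 2 = 1 := by omega
    simp only [Had, HaarW, e1, e2, e3, e4]
    norm_num
    have hs2 : ((Real.sqrt 2)⁻¹:ℝ) ^ 2 = 2⁻¹ := by rw [sq]; exact hs
    split_ifs <;>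
      first
        | ring1
        | linear_combination (2 * Had r q j * HaarW r q k) * hs
        | linear_combination (2 * Had r q (j - 2 ^ r)) * hs
  rw [Finset.sum_congr rfl (fun q _ => key q)]
  split_ifs with h1 h2 h2
  · rfl
  · exact Finset.sum_const_zero
  · exact Finset.sum_const_zero
  · rw [Finset.sum_ite_eq' (Finset.range (2 ^ r)) (k - 2 ^ r) (fun q => Had r q (j - 2 ^ r))]
    rw [if_pos (Finset.mem_range.mpr (by omega))]

lemma Gmat_level (L j k : ℕ) (hj1 : 2 ^ L ≤ j) (hj2 : j < 2 ^ (L + 1))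
    (hk1 : 2 ^ L ≤ k) (hk2 : k < 2 ^ (L + 1)) :
    ∀ r, L + 1 ≤ r → Gmat r j k = Had L (k - 2 ^ L) (j - 2 ^ L) := by
  intro r hr
  induction r, hr using Nat.le_induction with
  | base =>
    rw [Gmat_succ _ _ _ hk2, if_neg (by omega), if_neg (by omega)]
  | succ r hr ih =>
    have hLr : 2 ^ (L + 1) ≤ 2 ^ r := Nat.pow_le_pow_right (by norm_num) hr
    rw [Gmat_succ _ _ _ (by calc k < 2 ^ (L+1) := hk2
          _ ≤ 2 ^ (r+1) := Nat.pow_le_pow_right (by norm_num) (by omega)),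
      if_pos (by omega), if_pos (by omega), ih]

lemma Gmat_zero (r : ℕ) : ∀ ℓ j k, 1 ≤ ℓ → ℓ ≤ r → 1 ≤ j → j < 2 ^ r →
    2 ^ (ℓ - 1) ≤ k → k < 2 ^ ℓ → Nat.log 2 j ≠ ℓ - 1 → Gmat r j k = 0 := by
  induction r with
  | zero => intro ℓ j k h1 h2 _ _ _ _ _; omega
  | succ r ih =>
    intro ℓ j k h1 h2 hj1 hj2 hk1 hk2 hne
    have hkr : k < 2 ^ (r + 1) := lt_of_lt_of_le hk2 (Nat.pow_le_pow_right (by norm_num) h2)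
    rw [Gmat_succ _ _ _ hkr]
    split_ifs with hj hk hk
    · -- both in lower half
      have hlr : ℓ ≤ r := by
        have : 2 ^ (ℓ - 1) < 2 ^ r := lt_of_le_of_lt hk1 hk
        have := (Nat.pow_lt_pow_iff_right (a := 2) (by norm_num)).mp this
        omega
      exact ih ℓ j k h1 hlr hj1 hj hk1 hk2 hne
    · rfl
    · rfl
    · -- both in upper half : contradiction
      exfalso
      have hr1 : 2 ^ r < 2 ^ ℓ := lt_of_le_of_lt (by omega) hk2
      have hrl : r < ℓ := (Nat.pow_lt_pow_iff_right (a := 2) (by norm_num)).mp hr1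
      have hlog : Nat.log 2 j = r :=
        Nat.log_eq_of_pow_le_of_lt_pow (by omega) hj2
      omega

/-- Local coherence of row `j` (1-based, `j ≥ 2`) of `H_{2^r}^* W_{2^r}` restricted to the
columns of the `ℓ`-th dyadic level `𝒯_ℓ` (0-based columns `[2^{ℓ-1}, 2^ℓ)`):
it equals `min{1, 2^{-⌊log₂(j-1)⌋/2}}` if `⌊log₂(j-1)⌋ = ℓ - 1` and `0` otherwise. -/
theorem stmt_5 (r ℓ j : ℕ) (hl1 : 1 ≤ ℓ) (hlr : ℓ ≤ r) (hj2 : 2 ≤ j) (hjN : j ≤ 2 ^ r) :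
    (Finset.Ico (2 ^ (ℓ - 1)) (2 ^ ℓ)).sup'
      (Finset.nonempty_Ico.mpr (Nat.pow_lt_pow_right one_lt_two (by omega)))
      (fun k => |∑ m ∈ Finset.range (2 ^ r), Had r m (j - 1) * HaarW r m k|) =
    if Nat.log 2 (j - 1) = ℓ - 1 then
      min 1 ((Real.sqrt 2 ^ Nat.log 2 (j - 1))⁻¹)
    else 0 := by
  classical
  have hne := Finset.nonempty_Ico.mpr
      (Nat.pow_lt_pow_right one_lt_two (show ℓ - 1 < ℓ by omega))
  have hj1 : 1 ≤ j - 1 := by omega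
  have hjr : j - 1 < 2 ^ r := by
    have := Nat.one_le_two_pow (n := r); omega
  have h12 : (1:ℝ) ≤ Real.sqrt 2 := by
    rw [show (1:ℝ) = Real.sqrt 1 from (Real.sqrt_one).symm]
    exact Real.sqrt_le_sqrt (by norm_num)
  simp only [← Gmat_def]
  by_cases hc : Nat.log 2 (j - 1) = ℓ - 1
  · rw [if_pos hc, hc]
    have hpow1 : (1:ℝ) ≤ Real.sqrt 2 ^ (ℓ - 1) := one_le_pow₀ h12
    rw [min_eq_right (by
      rw [inv_le_one_iff₀]; right; exact hpow1)]
    rw [← inv_pow]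
    have hGA : ∀ k ∈ Finset.Ico (2 ^ (ℓ - 1)) (2 ^ ℓ),
        |Gmat r (j - 1) k| = (Real.sqrt 2)⁻¹ ^ (ℓ - 1) := by
      intro k hk
      rw [Finset.mem_Ico] at hk
      have hl : ℓ - 1 + 1 = ℓ := by omega
      have hjlo : 2 ^ (ℓ - 1) ≤ j - 1 := hc ▸ Nat.pow_log_le_self 2 (by omega)
      have hjhi : j - 1 < 2 ^ (ℓ - 1 + 1) := by
        rw [← hc]; exact Nat.lt_pow_succ_log_self (by norm_num) _
      rw [Gmat_level (ℓ - 1) (j - 1) k hjlo hjhi hk.1 (hl ▸ hk.2) r (by omega)]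
      exact had_abs _ _ _
    apply le_antisymm
    · exact Finset.sup'_le _ _ fun k hk => le_of_eq (hGA k hk)
    · have hmem : 2 ^ (ℓ - 1) ∈ Finset.Ico (2 ^ (ℓ - 1)) (2 ^ ℓ) := by
        rw [Finset.mem_Ico]
        exact ⟨le_refl _, Nat.pow_lt_pow_right one_lt_two (by omega)⟩
      exact le_trans (le_of_eq (hGA _ hmem).symm) (Finset.le_sup' (fun k => |Gmat r (j - 1) k|) hmem)
  · rw [if_neg hc]
    apply le_antisymm
    · apply Finset.sup'_le
      intro k hk
      rw [Finset.mem_Ico] at hk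
      rw [Gmat_zero r ℓ (j - 1) k hl1 hlr hj1 hjr hk.1 hk.2 hc, abs_zero]
    · have hmem : 2 ^ (ℓ - 1) ∈ Finset.Ico (2 ^ (ℓ - 1)) (2 ^ ℓ) := by
        rw [Finset.mem_Ico]
        exact ⟨le_refl _, Nat.pow_lt_pow_right one_lt_two (by omega)⟩
      exact le_trans (abs_nonneg _) (Finset.le_sup' (fun k => |Gmat r (j - 1) k|) hmem)
end
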